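/- arXiv:cs/0701097 — 2 statements merged into one kernel-verified Lean document; each statement's English description precedes it below -/
import Mathlib

section
/- Let C_0 be a linear code of length r over GF(q^m) with rank distribution A_i = #{c ∈ C_0 : rk(c) = i} (0 ≤ i ≤ r), let s ≥ 0, let B be an s × r matrix over GF(q), and let C_s = {(c,d) ∈ GF(q^m)^r × GF(q^m)^s : c − d·B ∈ C_0} be the s-th order B-elementary extension of C_0. Then for every u ≥ 0, the number of vectors of rank u in C_s equals Σ_{i=0}^{u} q^{i·s} · A_i · [s, u−i]_q · α(m−i, u−i); in particular this number does not depend on B. -/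
open Finset

/-- The rank of a vector `v` over the subfield `K`: the dimension over `K` of the
`K`-linear span of the coordinates of `v`. -/
noncomputable def rk (K : Type*) {F : Type*} [Field K] [Field F] [Algebra K F]
    {ι : Type*} (v : ι → F) : ℕ :=
  Module.finrank K (Submodule.span K (Set.range v))

/-- `α(m,u) = ∏_{i=0}^{u-1} (q^m - q^i)`, with `q^m` the real power (integer exponent `m`). -/
noncomputable def alphaR (q : ℝ) (m : ℤ) (u : ℕ) : ℝ :=
  ∏ i ∈ Finset.range u, (q ^ m - q ^ (i : ℤ))

/-- Gaussian binomial `[n,u]_q = α(n,u)/α(u,u)` (which is `0` when `u > n`). -/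
noncomputable def gaussR (q : ℝ) (n u : ℕ) : ℝ :=
  alphaR q n u / alphaR q u u

/-!
Since the entries of `d·B` lie in the `K`-span of the coordinates of `d`, the shear
`(c, d) ↦ (c - d·B, d)` is a rank-preserving bijection from `C_s` onto `C_0 × F^s`, so `B` may be
taken to be `0`. Appending one coordinate `x` to `d` raises the rank of `(c, d)` by one exactly when
`x` avoids the `K`-span `V` of the coordinates of `(c, d)`, and `V` has `q ^ rk (c, d)` elements;
hence the counts `N_s(u)` of rank-`u` vectors in `C_0 × F^s` satisfy
`N_{s+1}(u+1) = q^(u+1) N_s(u+1) + (q^m - q^u) N_s(u)` and `N_{s+1}(0) = N_s(0)`.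
By the `q`-Pascal rule `[s+1, t+1]_q = q^(t+1) [s, t+1]_q + [s, t]_q` the formula obeys the same
recursion, and both reduce to `A_u` when `s = 0`.
-/

section GaussianBinomial

variable {q : ℝ}

@[simp]
lemma alphaR_zero (z : ℤ) : alphaR q z 0 = 1 := by
  simp [alphaR]

lemma alphaR_succ (z : ℤ) (u : ℕ) : alphaR q z (u + 1) = alphaR q z u * (q ^ z - q ^ u) := by
  simp [alphaR, prod_range_succ]

lemma alphaR_add_one_succ (hq : q ≠ 0) (z : ℤ) (t : ℕ) :
    alphaR q (z + 1) (t + 1) =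
      q ^ (t + 1) * alphaR q z (t + 1) + q ^ t * (q ^ (t + 1) - 1) * alphaR q z t := by
  induction t with
  | zero => simp [alphaR_succ, zpow_add_one₀ hq]; ring
  | succ t ih =>
    rw [alphaR_succ _ (t + 1), ih, alphaR_succ z (t + 1), alphaR_succ z t, zpow_add_one₀ hq]
    ring

lemma alphaR_natCast_self_pos (hq : 1 < q) (t : ℕ) : 0 < alphaR q t t :=
  prod_pos fun i hi => sub_pos.2 <| by
    simpa using pow_lt_pow_right₀ hq (mem_range.1 hi)

lemma alphaR_natCast_succ_self (hq : q ≠ 0) (t : ℕ) :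
    alphaR q ((t + 1 : ℕ) : ℤ) (t + 1) = q ^ t * (q ^ (t + 1) - 1) * alphaR q t t := by
  have hvanish : alphaR q t (t + 1) = 0 := by simp [alphaR_succ]
  rw [Nat.cast_succ, alphaR_add_one_succ hq, hvanish, mul_zero, zero_add]

@[simp]
lemma gaussR_zero_right (n : ℕ) : gaussR q n 0 = 1 := by
  simp [gaussR]

lemma gaussR_zero_succ (k : ℕ) : gaussR q 0 (k + 1) = 0 := by
  rw [gaussR, alphaR, prod_eq_zero (mem_range.2 k.succ_pos) (by simp), zero_div]

lemma gaussR_succ_succ (hq : 1 < q) (s t : ℕ) :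
    gaussR q (s + 1) (t + 1) = q ^ (t + 1) * gaussR q s (t + 1) + gaussR q s t := by
  have hq0 : q ≠ 0 := by positivity
  have ht : alphaR q t t ≠ 0 := (alphaR_natCast_self_pos hq t).ne'
  have ht' : q ^ (t + 1) - 1 ≠ 0 := sub_ne_zero.2 (one_lt_pow₀ hq t.succ_ne_zero).ne'
  unfold gaussR
  rw [alphaR_natCast_succ_self hq0, Nat.cast_succ, alphaR_add_one_succ hq0]
  field_simp

end GaussianBinomial

section Formula

variable {q : ℝ} {m : ℕ} {A : ℕ → ℝ}

noncomputable def extRankFormula (q : ℝ) (m : ℕ) (A : ℕ → ℝ) (s u : ℕ) : ℝ :=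
  ∑ i ∈ range (u + 1), q ^ (i * s) * A i * gaussR q s (u - i) * alphaR q ((m : ℤ) - i) (u - i)

lemma extRankFormula_zero_left (u : ℕ) : extRankFormula q m A 0 u = A u := by
  rw [extRankFormula, sum_eq_single_of_mem u (self_mem_range_succ u)]
  · simp
  · intro i hi hne
    obtain ⟨k, hk⟩ : ∃ k, u - i = k + 1 := ⟨u - i - 1, by grind⟩
    rw [hk, gaussR_zero_succ, mul_zero, zero_mul]

lemma extRankFormula_zero_right (s : ℕ) : extRankFormula q m A s 0 = A 0 := by
  simp [extRankFormula]

lemma extRankFormula_term_succ (hq : 1 < q) {i u : ℕ} (hi : i ≤ u) (s : ℕ) :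
    q ^ (i * (s + 1)) * A i * gaussR q (s + 1) (u + 1 - i) * alphaR q ((m : ℤ) - i) (u + 1 - i) =
      q ^ (u + 1) * (q ^ (i * s) * A i * gaussR q s (u + 1 - i) *
          alphaR q ((m : ℤ) - i) (u + 1 - i)) +
        (q ^ m - q ^ u) *
          (q ^ (i * s) * A i * gaussR q s (u - i) * alphaR q ((m : ℤ) - i) (u - i)) := by
  obtain ⟨t, rfl⟩ := Nat.exists_eq_add_of_le hi
  have hq0 : q ≠ 0 := by positivity
  have hshift : q ^ i * (q ^ ((m : ℤ) - i) - q ^ t) = q ^ m - q ^ (i + t) := by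
    rw [mul_sub, ← pow_add, ← zpow_natCast q i, ← zpow_add₀ hq0, add_sub_cancel, zpow_natCast]
  rw [add_assoc, Nat.add_sub_cancel_left, Nat.add_sub_cancel_left, gaussR_succ_succ hq,
    alphaR_succ, ← hshift]
  ring

lemma extRankFormula_succ_succ (hq : 1 < q) (s u : ℕ) :
    extRankFormula q m A (s + 1) (u + 1) =
      q ^ (u + 1) * extRankFormula q m A s (u + 1) +
        (q ^ m - q ^ u) * extRankFormula q m A s u := by
  simp only [extRankFormula]
  rw [sum_range_succ, sum_congr rfl fun i hi =>
      extRankFormula_term_succ hq (Nat.lt_succ_iff.1 (mem_range.1 hi)) s,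
    sum_add_distrib, ← mul_sum, ← mul_sum, sum_range_succ _ (u + 1)]
  simp only [Nat.sub_self, gaussR_zero_right, alphaR_zero]
  ring

end Formula

section Rank

open Submodule Set

variable (K : Type*) {F : Type*} [Field K] [Field F] [Algebra K F] {ι κ : Type*}

lemma span_range_sum_elim_add_le {c w : ι → F} {d : κ → F} (hw : ∀ j, w j ∈ span K (range d)) :
    span K (range (Sum.elim (c + w) d)) ≤ span K (range (Sum.elim c d)) := by
  have hd : span K (range d) ≤ span K (range (Sum.elim c d)) :=
    span_mono (by rw [Sum.elim_range]; exact subset_union_right)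
  rw [span_le]
  rintro _ ⟨j | j, rfl⟩
  · exact add_mem (subset_span ⟨Sum.inl j, rfl⟩) (hd (hw j))
  · exact subset_span ⟨Sum.inr j, rfl⟩

lemma rk_sum_elim_add {c w : ι → F} {d : κ → F} (hw : ∀ j, w j ∈ span K (range d)) :
    rk K (Sum.elim (c + w) d) = rk K (Sum.elim c d) := by
  have hge := span_range_sum_elim_add_le K (c := c + w) (w := -w) fun j => neg_mem (hw j)
  rw [add_neg_cancel_right] at hge
  rw [rk, rk, le_antisymm (span_range_sum_elim_add_le K hw) hge]

lemma vecMul_map_algebraMap_mem_span [Fintype κ] (d : κ → F) (B : Matrix κ ι K) (j : ι) :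
    (Matrix.vecMul d (B.map (algebraMap K F))) j ∈ span K (range d) := by
  simp only [Matrix.vecMul, dotProduct, Matrix.map_apply, ← Algebra.smul_def, mul_comm (d _)]
  exact sum_mem fun i _ => smul_mem _ _ (subset_span ⟨i, rfl⟩)

lemma rk_sum_elim_sub_vecMul [Fintype κ] (c : ι → F) (d : κ → F) (B : Matrix κ ι K) :
    rk K (Sum.elim (c - Matrix.vecMul d (B.map (algebraMap K F))) d) = rk K (Sum.elim c d) := by
  rw [sub_eq_add_neg]
  exact rk_sum_elim_add K fun j => neg_mem (vecMul_map_algebraMap_mem_span K d B j)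

lemma rk_sum_elim_of_isEmpty [IsEmpty κ] (c : ι → F) (d : κ → F) :
    rk K (Sum.elim c d) = rk K c := by
  rw [rk, rk, Sum.elim_range, range_eq_empty d, union_empty]

lemma rk_sum_elim_cons {n : ℕ} (c : ι → F) (x : F) (d : Fin n → F) :
    rk K (Sum.elim c (Fin.cons x d)) =
      Module.finrank K ↥(span K (range (Sum.elim c d)) ⊔ K ∙ x) := by
  rw [rk, Sum.elim_range, Fin.range_cons, union_insert, span_insert, sup_comm, Sum.elim_range]

end Rank

open Module Submodule in
lemma natCard_finrank_sup_span_singleton_eq {K M : Type*} [Field K] [Fintype K] [AddCommGroup M]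
    [Module K M] [Fintype M] (V : Submodule K M) (n : ℕ) :
    (Nat.card {x : M // finrank K ↥(V ⊔ K ∙ x) = n} : ℝ) =
      (if finrank K V = n then (Fintype.card K : ℝ) ^ n else 0) +
        (if finrank K V + 1 = n then (Fintype.card M : ℝ) - Fintype.card K ^ finrank K V
          else 0) := by
  classical
  have hfinrank (x : M) : finrank K ↥(V ⊔ K ∙ x) = finrank K V + if x ∈ V then 0 else 1 := by
    split_ifs with hx
    · rw [sup_eq_left.2 ((span_singleton_le_iff_mem x V).2 hx), add_zero]
    · exact finrank_sup_span_singleton hx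
  have hV : Nat.card V = Fintype.card K ^ finrank K V := by
    rw [natCard_eq_pow_finrank (K := K), Nat.card_eq_fintype_card]
  by_cases hn : finrank K V = n
  · subst hn
    have hiff (x : M) : finrank K ↥(V ⊔ K ∙ x) = finrank K V ↔ x ∈ V := by
      rw [hfinrank]; split_ifs <;> simpa
    rw [Nat.card_congr (Equiv.subtypeEquivRight hiff), if_pos rfl, if_neg (Nat.succ_ne_self _),
      add_zero]
    exact_mod_cast hV
  by_cases hn' : finrank K V + 1 = n
  · subst hn'
    have hiff (x : M) : finrank K ↥(V ⊔ K ∙ x) = finrank K V + 1 ↔ x ∉ V := by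
      rw [hfinrank]; split_ifs <;> simpa
    rw [Nat.card_congr (Equiv.subtypeEquivRight hiff), Nat.card_eq_fintype_card,
      Fintype.card_subtype_compl, Nat.cast_sub (Fintype.card_subtype_le _),
      ← Nat.card_eq_fintype_card (α := V), hV]
    simp
  have hempty (x : M) : finrank K ↥(V ⊔ K ∙ x) ≠ n := by
    rw [hfinrank]; split_ifs <;> simpa
  simp [hn, hn', hempty]

lemma natCard_subtype_prod_eq_sum {α β : Type*} [Fintype α] [Finite β] (P : α → β → Prop) :
    Nat.card {z : α × β // P z.1 z.2} = ∑ a, Nat.card {b // P a b} := by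
  rw [Nat.card_congr (Equiv.subtypeProdEquivSigmaSubtype P), Nat.card_sigma]

section Count

variable (K : Type*) {F : Type*} [Field K] [Field F] [Algebra K F] {r : ℕ}

noncomputable def prodRankCount (C0 : Submodule F (Fin r → F)) (s u : ℕ) : ℕ :=
  Nat.card {p : C0 × (Fin s → F) // rk K (Sum.elim (p.1 : Fin r → F) p.2) = u}

lemma prodRankCount_zero_left (C0 : Submodule F (Fin r → F)) (u : ℕ) :
    prodRankCount K C0 0 u = Nat.card {c : Fin r → F // c ∈ C0 ∧ rk K c = u} :=
  Nat.card_congr <|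
    ((Equiv.prodUnique C0 (Fin 0 → F)).subtypeEquiv fun p => by
      rw [rk_sum_elim_of_isEmpty]; rfl).trans
    (Equiv.subtypeSubtypeEquivSubtypeInter (· ∈ C0) fun c => rk K c = u)

lemma natCard_elementaryExtension_eq_prodRankCount (C0 : Submodule F (Fin r → F)) {s : ℕ}
    (B : Matrix (Fin s) (Fin r) K) (u : ℕ) :
    Nat.card {p : (Fin r → F) × (Fin s → F) //
        p.1 - Matrix.vecMul p.2 (B.map (algebraMap K F)) ∈ C0 ∧ rk K (Sum.elim p.1 p.2) = u} =
      prodRankCount K C0 s u :=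
  Nat.card_congr
    { toFun := fun p => ⟨(⟨_, p.2.1⟩, p.1.2), (rk_sum_elim_sub_vecMul K _ _ B).trans p.2.2⟩
      invFun := fun p => ⟨(p.1.1 + Matrix.vecMul p.1.2 (B.map (algebraMap K F)), p.1.2),
        by simp, (rk_sum_elim_add K (vecMul_map_algebraMap_mem_span K _ B)).trans p.2⟩
      left_inv := fun p => by ext <;> simp
      right_inv := fun p => by ext <;> simp }

variable [Fintype F]

open Classical in
lemma prodRankCount_eq_sum (C0 : Submodule F (Fin r → F)) (s n : ℕ) :
    (prodRankCount K C0 s n : ℝ) =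
      ∑ a : C0 × (Fin s → F), if rk K (Sum.elim (a.1 : Fin r → F) a.2) = n then 1 else 0 := by
  rw [prodRankCount, Nat.card_eq_fintype_card, Fintype.card_subtype, card_filter]
  push_cast
  rfl

variable [Fintype K]

open Classical in
lemma prodRankCount_succ (C0 : Submodule F (Fin r → F)) (s n : ℕ) :
    (prodRankCount K C0 (s + 1) n : ℝ) =
      Fintype.card K ^ n * prodRankCount K C0 s n +
        ∑ a : C0 × (Fin s → F), if rk K (Sum.elim (a.1 : Fin r → F) a.2) + 1 = n then
          (Fintype.card F : ℝ) - Fintype.card K ^ rk K (Sum.elim (a.1 : Fin r → F) a.2) else 0 := by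
  let e : (C0 × (Fin s → F)) × F ≃ C0 × (Fin (s + 1) → F) :=
    (Equiv.prodAssoc _ _ _).trans
      ((Equiv.refl C0).prodCongr ((Equiv.prodComm _ _).trans (Fin.consEquiv fun _ => F)))
  rw [prodRankCount, ← Nat.card_congr (e.subtypeEquiv
      (p := fun z => rk K (Sum.elim (z.1.1 : Fin r → F) (Fin.cons z.2 z.1.2)) = n)
      fun _ => Iff.rfl),
    natCard_subtype_prod_eq_sum fun (a : C0 × (Fin s → F)) (x : F) =>
      rk K (Sum.elim (a.1 : Fin r → F) (Fin.cons x a.2)) = n,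
    Nat.cast_sum, prodRankCount_eq_sum, mul_sum, ← sum_add_distrib]
  refine sum_congr rfl fun a _ => ?_
  simp only [rk_sum_elim_cons, natCard_finrank_sup_span_singleton_eq, mul_ite, mul_one, mul_zero]
  rfl

lemma prodRankCount_succ_zero (C0 : Submodule F (Fin r → F)) (s : ℕ) :
    prodRankCount K C0 (s + 1) 0 = prodRankCount K C0 s 0 := by
  have h := prodRankCount_succ K C0 s 0
  simp only [Nat.add_one_ne_zero, if_false, sum_const_zero, add_zero, pow_zero, one_mul] at h
  exact_mod_cast h

lemma prodRankCount_succ_succ (C0 : Submodule F (Fin r → F)) (s u : ℕ) :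
    (prodRankCount K C0 (s + 1) (u + 1) : ℝ) =
      Fintype.card K ^ (u + 1) * prodRankCount K C0 s (u + 1) +
        (Fintype.card F - Fintype.card K ^ u) * prodRankCount K C0 s u := by
  classical
  rw [prodRankCount_succ, prodRankCount_eq_sum K C0 s u, mul_sum]
  congr 1
  refine sum_congr rfl fun a _ => ?_
  simp only [add_left_inj, mul_ite, mul_one, mul_zero]
  split_ifs with h <;> simp [h]

theorem prodRankCount_eq_extRankFormula {m : ℕ} (hF : Fintype.card F = Fintype.card K ^ m)
    (C0 : Submodule F (Fin r → F)) (s u : ℕ) :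
    (prodRankCount K C0 s u : ℝ) =
      extRankFormula (Fintype.card K) m (fun i => Nat.card {c // c ∈ C0 ∧ rk K c = i}) s u := by
  have hq : (1 : ℝ) < Fintype.card K := by exact_mod_cast Fintype.one_lt_card
  induction s generalizing u with
  | zero => rw [prodRankCount_zero_left, extRankFormula_zero_left]
  | succ s ih =>
    cases u with
    | zero =>
      rw [prodRankCount_succ_zero, ih, extRankFormula_zero_right, extRankFormula_zero_right]
    | succ u =>
      rw [prodRankCount_succ_succ, ih, ih, extRankFormula_succ_succ hq, hF, Nat.cast_pow]

end Count

theorem rank_enumerator_elementary_extension_general (q m r : ℕ)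
    (K F : Type*) [Field K] [Field F] [Algebra K F] [Fintype K] [Fintype F]
    (hK : Fintype.card K = q) (hF : Fintype.card F = q ^ m)
    (C0 : Submodule F (Fin r → F)) (s : ℕ) (B : Matrix (Fin s) (Fin r) K) (u : ℕ) :
    (Nat.card {p : (Fin r → F) × (Fin s → F) //
        p.1 - Matrix.vecMul p.2 (B.map (algebraMap K F)) ∈ C0 ∧
          rk K (Sum.elim p.1 p.2) = u} : ℝ) =
      ∑ i ∈ Finset.range (u + 1),
        (q : ℝ) ^ (i * s) * (Nat.card {c : Fin r → F // c ∈ C0 ∧ rk K c = i} : ℝ) *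
          gaussR (q : ℝ) s (u - i) * alphaR (q : ℝ) ((m : ℤ) - i) (u - i) := by
  rw [natCard_elementaryExtension_eq_prodRankCount,
    prodRankCount_eq_extRankFormula K (by rw [hF, hK]), hK]
  rfl

/-- if `C_0 ⊆ GF(q^m)^r` is a linear code with rank distribution `A_i`,
then the number of vectors of rank `u` in its `s`-th order `B`-elementary extension
`C_s = {(c,d) : c - d·B ∈ C_0}` equals `Σ_{i=0}^u q^{i·s} A_i [s,u-i]_q α(m-i,u-i)`;
in particular it does not depend on `B`. -/
theorem rank_enumerator_elementary_extension (q m r : ℕ) (hq : IsPrimePow q)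
    (hm : 0 < m) (hr : 0 < r)
    (K F : Type*) [Field K] [Field F] [Algebra K F] [Fintype K] [Fintype F]
    (hK : Fintype.card K = q) (hF : Fintype.card F = q ^ m)
    (C0 : Submodule F (Fin r → F)) (s : ℕ) (B : Matrix (Fin s) (Fin r) K) (u : ℕ) :
    (Nat.card {p : (Fin r → F) × (Fin s → F) //
        p.1 - Matrix.vecMul p.2 (B.map (algebraMap K F)) ∈ C0 ∧
          rk K (Sum.elim p.1 p.2) = u} : ℝ) =
      ∑ i ∈ Finset.range (u + 1),
        (q : ℝ) ^ (i * s) * (Nat.card {c : Fin r → F // c ∈ C0 ∧ rk K c = i} : ℝ) *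
          gaussR (q : ℝ) s (u - i) * alphaR (q : ℝ) ((m : ℤ) - i) (u - i) :=
  rank_enumerator_elementary_extension_general q m r K F hK hF C0 s B u
end

section
/- Let C be a k-dimensional GF(q^m)-linear subspace of GF(q^m)^n with rank distribution A_i = #{c ∈ C : rk(c) = i}, and suppose that 0 ≤ ν ≤ n is such that every nonzero codeword of the dual code C^⊥ has rank strictly greater than ν (i.e., ν is less than the minimum rank distance of C^⊥). Then Σ_{i=0}^{n−ν} [n−i, ν]_q A_i = q^{m(k−ν)} · [n, ν]_q. -/
open Finset

/-!
Double count the pairs `(c, W)` with `c ∈ C` and `W` a `ν`-dimensional subspace of `GF(q)^n`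
orthogonal to `c`, i.e. `∑ t, w t • c t = 0` for all `w ∈ W`.

For a fixed `c`, these `W` are the `ν`-dimensional subspaces of the kernel of
`x ↦ ∑ t, x t • c t`, which has dimension `n - rk c`; there are `[n - rk c, ν]_q` of them.

For a fixed `W` with basis `w₁, …, w_ν`, the `GF(q^m)`-linear map `c ↦ (⟨w_j, c⟩)_j` from `C`
to `GF(q^m)^ν` is onto. Otherwise some nonzero `∑ λ_j w_j` lies in `C^⊥`, and its coordinates lie
in the `GF(q)`-span of `λ₁, …, λ_ν`, so its rank is at most `ν`. Hence exactly `q^{m(k-ν)}`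
codewords are orthogonal to `W`.
-/

open Module Matrix

theorem gaussR_eq_zero_of_lt (q : ℝ) {d u : ℕ} (h : d < u) : gaussR q d u = 0 := by
  rw [gaussR, alphaR, prod_eq_zero (mem_range.2 h) (by simp), zero_div]

theorem alphaR_natCast {q d u : ℕ} (hq : 1 ≤ q) (hu : u ≤ d) :
    alphaR q d u = ((∏ i : Fin u, (q ^ d - q ^ (i : ℕ)) : ℕ) : ℝ) := by
  rw [alphaR, ← Fin.prod_univ_eq_prod_range, Nat.cast_prod]
  refine prod_congr rfl fun i _ => ?_
  rw [Nat.cast_sub (Nat.pow_le_pow_right hq (by omega))]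
  push_cast
  rfl

section Grassmannian

variable {K V : Type*} [Field K] [Fintype K] [AddCommGroup V] [Module K V] [Finite V]

theorem card_linearIndependent_span_eq {u : ℕ} (W : Submodule K V) (hW : finrank K W = u) :
    Nat.card {s : Fin u → V // LinearIndependent K s ∧ Submodule.span K (Set.range s) = W} =
      ∏ i : Fin u, (Fintype.card K ^ u - Fintype.card K ^ (i : ℕ)) := by
  have e : {s : Fin u → V // LinearIndependent K s ∧ Submodule.span K (Set.range s) = W} ≃
      {s : Fin u → W // LinearIndependent K s} := by
    refine (Equiv.subtypeEquivRight fun s => ?_).trans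
      ((Equiv.subtypeSubtypeEquivSubtypeInter (fun s : Fin u → V => ∀ j, s j ∈ W)
        (fun s => LinearIndependent K s)).symm.trans
      (Equiv.subtypeEquiv Equiv.subtypePiEquivPi fun s => ?_))
    · constructor
      · rintro ⟨hs, rfl⟩
        exact ⟨fun j => Submodule.subset_span (Set.mem_range_self j), hs⟩
      · rintro ⟨hsW, hs⟩
        refine ⟨hs, Submodule.eq_of_le_of_finrank_eq ?_ ?_⟩
        · exact Submodule.span_le.2 (Set.range_subset_iff.2 hsW)
        · rw [finrank_span_eq_card hs, Fintype.card_fin, hW]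
    · rw [← W.subtype.linearIndependent_iff W.ker_subtype]
      rfl
  rw [Nat.card_congr e, card_linearIndependent hW.ge, hW]

theorem card_submodule_finrank_eq_mul {u : ℕ} (hu : u ≤ finrank K V) :
    Nat.card {W : Submodule K V // finrank K W = u} *
        ∏ i : Fin u, (Fintype.card K ^ u - Fintype.card K ^ (i : ℕ)) =
      ∏ i : Fin u, (Fintype.card K ^ finrank K V - Fintype.card K ^ (i : ℕ)) := by
  classical
  have := Fintype.ofFinite {W : Submodule K V // finrank K W = u}
  let span : {s : Fin u → V // LinearIndependent K s} → {W : Submodule K V // finrank K W = u} :=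
    fun s => ⟨Submodule.span K (Set.range s.1), by rw [finrank_span_eq_card s.2, Fintype.card_fin]⟩
  have fiber (W : {W : Submodule K V // finrank K W = u}) :
      {s // span s = W} ≃
        {s : Fin u → V // LinearIndependent K s ∧ Submodule.span K (Set.range s) = W} :=
    (Equiv.subtypeEquivRight fun _ => Subtype.ext_iff).trans
      (Equiv.subtypeSubtypeEquivSubtypeInter (fun s => LinearIndependent K s)
        fun s => Submodule.span K (Set.range s) = W.1)
  rw [← card_linearIndependent hu, ← Nat.card_congr (Equiv.sigmaFiberEquiv span), Nat.card_sigma,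
    Fintype.sum_congr _ _ fun W => (Nat.card_congr (fiber W)).trans
      (card_linearIndependent_span_eq W.1 W.2),
    sum_const, card_univ, smul_eq_mul, Nat.card_eq_fintype_card]

theorem card_submodule_finrank_eq_gaussR (u : ℕ) :
    (Nat.card {W : Submodule K V // finrank K W = u} : ℝ) =
      gaussR (Fintype.card K) (finrank K V) u := by
  have hq : 1 ≤ Fintype.card K := Fintype.card_pos
  rcases le_or_gt u (finrank K V) with hu | hu
  · have hpos : 0 < ∏ i : Fin u, (Fintype.card K ^ u - Fintype.card K ^ (i : ℕ)) :=
      prod_pos fun i _ => Nat.sub_pos_of_lt (Nat.pow_lt_pow_right Fintype.one_lt_card i.2)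
    rw [gaussR, alphaR_natCast hq hu, alphaR_natCast hq le_rfl,
      eq_div_iff (by exact_mod_cast hpos.ne')]
    exact_mod_cast card_submodule_finrank_eq_mul hu
  · have : IsEmpty {W : Submodule K V // finrank K W = u} :=
      ⟨fun W => (W.2 ▸ Submodule.finrank_le W.1).not_gt hu⟩
    rw [Nat.card_of_isEmpty, gaussR_eq_zero_of_lt _ hu, Nat.cast_zero]

theorem card_submodule_finrank_eq_le_eq_gaussR (P : Submodule K V) (u : ℕ) :
    (Nat.card {W : Submodule K V // finrank K W = u ∧ W ≤ P} : ℝ) =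
      gaussR (Fintype.card K) (finrank K P) u := by
  have e : {W : Submodule K P // finrank K W = u} ≃
      {W : Submodule K V // finrank K W = u ∧ W ≤ P} :=
    ((Submodule.MapSubtype.orderIso P).toEquiv.subtypeEquiv fun W =>
        iff_of_eq (congrArg (· = u) (Submodule.finrank_map_subtype_eq P W).symm)).trans
      ((Equiv.subtypeSubtypeEquivSubtypeInter (· ≤ P) (finrank K · = u)).trans
        (Equiv.subtypeEquivRight fun _ => and_comm))
  rw [← Nat.card_congr e, card_submodule_finrank_eq_gaussR]

end Grassmannian

section Rank

variable {K F : Type*} [Field K] [Field F] [Algebra K F] {ι : Type*}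

theorem rk_le_card [Fintype ι] (v : ι → F) : rk K v ≤ Fintype.card ι :=
  finrank_range_le_card v

theorem rk_le_of_forall_mem_span {κ : Type*} [Fintype κ] (x : κ → F) {v : ι → F}
    (hv : ∀ t, v t ∈ Submodule.span K (Set.range x)) : rk K v ≤ Fintype.card κ :=
  have := FiniteDimensional.span_of_finite K (Set.finite_range x)
  (Submodule.finrank_mono (Submodule.span_le.2 (Set.range_subset_iff.2 hv))).trans
    (finrank_range_le_card x)

theorem finrank_ker_linearCombination [Fintype ι] (c : ι → F) :
    finrank K (LinearMap.ker (Fintype.linearCombination K c)) = Fintype.card ι - rk K c := by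
  have h := (Fintype.linearCombination K c).finrank_range_add_finrank_ker
  rw [Fintype.range_linearCombination, finrank_fintype_fun_eq_card] at h
  rw [rk]
  omega

theorem card_submodule_finrank_eq_le_ker_eq_gaussR [Fintype K] [Fintype ι] (c : ι → F)
    (u : ℕ) :
    (Nat.card {W : Submodule K (ι → K) //
        finrank K W = u ∧ W ≤ LinearMap.ker (Fintype.linearCombination K c)} : ℝ) =
      gaussR (Fintype.card K) (Fintype.card ι - rk K c) u := by
  rw [card_submodule_finrank_eq_le_eq_gaussR, finrank_ker_linearCombination]

theorem sum_range_gaussR_mul_card_rk_eq [Fintype ι] (q : ℝ) (ν : ℕ) (S : Finset (ι → F)) :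
    ∑ i ∈ range (Fintype.card ι - ν + 1),
        gaussR q (Fintype.card ι - i) ν * #{c ∈ S | rk K c = i} =
      ∑ c ∈ S, gaussR q (Fintype.card ι - rk K c) ν := by
  set N := Fintype.card ι
  calc ∑ i ∈ range (N - ν + 1), gaussR q (N - i) ν * #{c ∈ S | rk K c = i}
      = ∑ i ∈ range (N + 1), gaussR q (N - i) ν * #{c ∈ S | rk K c = i} := by
        refine sum_subset (range_subset_range.2 (by omega)) fun i hi hi' => ?_
        rw [mem_range] at hi hi'
        rw [gaussR_eq_zero_of_lt _ (by omega), zero_mul]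
    _ = ∑ c ∈ S, gaussR q (N - rk K c) ν := by
        rw [← sum_fiberwise_of_maps_to fun c _ => mem_range_succ_iff.2 (rk_le_card (K := K) c)]
        refine sum_congr rfl fun i _ => ?_
        rw [sum_congr rfl fun c hc => by rw [(mem_filter.1 hc).2], sum_const, nsmul_eq_mul,
          mul_comm]

theorem span_row_le_ker_linearCombination_iff [Fintype ι] {κ : Type*} (B : Matrix κ ι K)
    (c : ι → F) :
    Submodule.span K (Set.range B.row) ≤ LinearMap.ker (Fintype.linearCombination K c) ↔
      B.map (algebraMap K F) *ᵥ c = 0 := by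
  rw [Submodule.span_le, Set.range_subset_iff, funext_iff]
  simp only [SetLike.mem_coe, LinearMap.mem_ker, Fintype.linearCombination_apply, mulVec,
    dotProduct, map_apply, Algebra.smul_def, row, Pi.zero_apply]

end Rank

theorem surjective_mulVecLin_comp_subtype {F ι κ : Type*} [Field F] [Fintype ι] [Fintype κ]
    (A : Matrix κ ι F) (C : Submodule F (ι → F))
    (hA : ∀ x : κ → F, (∀ c ∈ C, x ᵥ* A ⬝ᵥ c = 0) → x = 0) :
    Function.Surjective (A.mulVecLin ∘ₗ C.subtype) := by
  classical
  rw [← LinearMap.dualMap_injective_iff, injective_iff_map_eq_zero]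
  intro f hf
  obtain ⟨x, rfl⟩ := (dotProductEquiv F κ).surjective f
  rw [hA x fun c hc => ?_, map_zero]
  rw [← dotProduct_mulVec]
  exact LinearMap.congr_fun hf ⟨c, hc⟩

theorem natCard_ker_mul_natCard_of_surjective {R M N : Type*} [Ring R] [AddCommGroup M]
    [Module R M] [AddCommGroup N] [Module R N] {f : M →ₗ[R] N} (hf : Function.Surjective f) :
    Nat.card (LinearMap.ker f) * Nat.card N = Nat.card M := by
  rw [Submodule.card_eq_card_quotient_mul_card (LinearMap.ker f),
    Nat.card_congr (f.quotKerEquivOfSurjective hf).toEquiv, mul_comm]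

section Code

variable {K F : Type*} [Field K] [Field F] [Algebra K F] {ι : Type*} [Fintype ι]
  {C : Submodule F (ι → F)} {ν : ℕ}

theorem eq_zero_of_vecMul_map_mem_dual
    (hdual : ∀ v : ι → F, (∀ c ∈ C, ∑ t, v t * c t = 0) → v ≠ 0 → ν < rk K v)
    {B : Matrix (Fin ν) ι K} (hB : LinearIndependent K B.row) {x : Fin ν → F}
    (hx : ∀ c ∈ C, x ᵥ* B.map (algebraMap K F) ⬝ᵥ c = 0) : x = 0 := by
  have hrk : rk K (x ᵥ* B.map (algebraMap K F)) ≤ ν := by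
    refine (rk_le_of_forall_mem_span x fun t => ?_).trans_eq (Fintype.card_fin ν)
    simp only [vecMul, dotProduct, map_apply, mul_comm (x _), ← Algebra.smul_def]
    exact Submodule.sum_smul_mem _ _ fun j _ => Submodule.subset_span (Set.mem_range_self j)
  have hzero : x ᵥ* B.map (algebraMap K F) = 0 := by
    by_contra hne
    exact (hdual _ hx hne).not_ge hrk
  have hinj : Function.Injective fun y => y ᵥ* B.map (algebraMap K F) :=
    vecMul_injective_iff.2 (linearIndependent_algebraMap_comp_iff.2 hB)
  exact hinj (hzero.trans (zero_vecMul _).symm)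

theorem natCard_orthogonal_mul_pow
    (hdual : ∀ v : ι → F, (∀ c ∈ C, ∑ t, v t * c t = 0) → v ≠ 0 → ν < rk K v)
    (W : Submodule K (ι → K)) (hW : finrank K W = ν) :
    Nat.card {c : ι → F // c ∈ C ∧ W ≤ LinearMap.ker (Fintype.linearCombination K c)} *
      Nat.card F ^ ν = Nat.card F ^ finrank F C := by
  let b := Module.finBasisOfFinrankEq K W hW
  let B : Matrix (Fin ν) ι K := of fun j => b j
  have hB : LinearIndependent K B.row := b.linearIndependent.map' W.subtype W.ker_subtype
  have hspan : Submodule.span K (Set.range B.row) = W := by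
    have hrange : Set.range B.row = W.subtype '' Set.range b := by
      rw [← Set.range_comp]
      rfl
    rw [hrange, Submodule.span_image, b.span_eq, Submodule.map_subtype_top]
  let L := (B.map (algebraMap K F)).mulVecLin ∘ₗ C.subtype
  have e : {c : ι → F // c ∈ C ∧ W ≤ LinearMap.ker (Fintype.linearCombination K c)} ≃
      LinearMap.ker L :=
    (Equiv.subtypeSubtypeEquivSubtypeInter (· ∈ C) _).symm.trans
      (Equiv.subtypeEquivRight fun c => by
        rw [← hspan, span_row_le_ker_linearCombination_iff]
        rfl)
  have hcard : Nat.card (Fin ν → F) = Nat.card F ^ ν := by rw [Nat.card_fun, Nat.card_fin]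
  have hL : Function.Surjective L :=
    surjective_mulVecLin_comp_subtype _ C fun _ hx => eq_zero_of_vecMul_map_mem_dual hdual hB hx
  rw [Nat.card_congr e, ← hcard, natCard_ker_mul_natCard_of_surjective hL,
    Module.natCard_eq_pow_finrank (K := F)]

theorem natCard_orthogonal_eq_zpow
    (hdual : ∀ v : ι → F, (∀ c ∈ C, ∑ t, v t * c t = 0) → v ≠ 0 → ν < rk K v)
    (W : Submodule K (ι → K)) (hW : finrank K W = ν) [Finite F] :
    (Nat.card {c : ι → F // c ∈ C ∧ W ≤ LinearMap.ker (Fintype.linearCombination K c)} : ℝ) =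
      (Nat.card F : ℝ) ^ ((finrank F C : ℤ) - ν) := by
  have hF : (Nat.card F : ℝ) ≠ 0 := Nat.cast_ne_zero.2 Nat.card_pos.ne'
  rw [zpow_sub₀ hF, zpow_natCast, zpow_natCast, eq_div_iff (pow_ne_zero _ hF)]
  exact_mod_cast natCard_orthogonal_mul_pow hdual W hW

end Code

theorem rank_distribution_moments_below_dual_distance_general (q m n k : ℕ)
    (K F : Type*) [Field K] [Field F] [Algebra K F] [Fintype K] [Fintype F]
    (hK : Fintype.card K = q) (hF : Fintype.card F = q ^ m)
    (C : Submodule F (Fin n → F)) (hCk : Module.finrank F C = k)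
    (ν : ℕ)
    (hdual : ∀ v : Fin n → F, (∀ c ∈ C, ∑ t, v t * c t = 0) → v ≠ 0 → ν < rk K v) :
    ∑ i ∈ Finset.range (n - ν + 1),
        gaussR (q : ℝ) (n - i) ν * (Nat.card {c : Fin n → F // c ∈ C ∧ rk K c = i} : ℝ) =
      (q : ℝ) ^ ((m : ℤ) * ((k : ℤ) - (ν : ℤ))) * gaussR (q : ℝ) n ν := by
  classical
  have := Fintype.ofFinite (Submodule K (Fin n → K))
  let S : Finset (Fin n → F) := {c | c ∈ C}
  let G : Finset (Submodule K (Fin n → K)) := {W | finrank K W = ν}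
  let orth (c : Fin n → F) (W : Submodule K (Fin n → K)) : Prop :=
    W ≤ LinearMap.ker (Fintype.linearCombination K c)
  have card_S (p : (Fin n → F) → Prop) [DecidablePred p] :
      Nat.card {c // c ∈ C ∧ p c} = #{c ∈ S | p c} := by
    rw [Nat.card_eq_fintype_card, Fintype.card_subtype, filter_filter]
  have card_G (p : Submodule K (Fin n → K) → Prop) [DecidablePred p] :
      Nat.card {W : Submodule K (Fin n → K) // finrank K W = ν ∧ p W} = #{W ∈ G | p W} := by
    rw [Nat.card_eq_fintype_card, Fintype.card_subtype, filter_filter]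
  have card_G_univ : Nat.card {W : Submodule K (Fin n → K) // finrank K W = ν} = #G := by
    rw [Nat.card_eq_fintype_card, Fintype.card_subtype]
  calc ∑ i ∈ range (n - ν + 1),
        gaussR (q : ℝ) (n - i) ν * (Nat.card {c : Fin n → F // c ∈ C ∧ rk K c = i} : ℝ)
      = ∑ c ∈ S, gaussR (q : ℝ) (n - rk K c) ν := by
        simp_rw [card_S]
        simpa only [Fintype.card_fin] using sum_range_gaussR_mul_card_rk_eq (K := K) (q : ℝ) ν S
    _ = ∑ c ∈ S, (#{W ∈ G | orth c W} : ℝ) := sum_congr rfl fun c _ => by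
        rw [← card_G, card_submodule_finrank_eq_le_ker_eq_gaussR, hK, Fintype.card_fin]
    _ = ∑ W ∈ G, (#{c ∈ S | orth c W} : ℝ) := by
        exact_mod_cast sum_card_bipartiteAbove_eq_sum_card_bipartiteBelow orth
    _ = (q : ℝ) ^ ((m : ℤ) * ((k : ℤ) - (ν : ℤ))) * gaussR (q : ℝ) n ν := by
        rw [sum_congr rfl fun W hW => by
            rw [← card_S, natCard_orthogonal_eq_zpow hdual W (mem_filter.1 hW).2]]
        rw [sum_const, nsmul_eq_mul, mul_comm, ← card_G_univ, card_submodule_finrank_eq_gaussR,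
          finrank_fin_fun, hK, Nat.card_eq_fintype_card, hF, hCk]
        push_cast
        rw [← zpow_natCast, ← _root_.zpow_mul]

/-- if `C` is a `k`-dimensional linear code in `GF(q^m)^n` with rank
distribution `A_i`, and `0 ≤ ν ≤ n` is smaller than the minimum rank distance of the
dual code `C^⊥`, then `Σ_{i=0}^{n-ν} [n-i,ν]_q A_i = q^{m(k-ν)} [n,ν]_q`. -/
theorem rank_distribution_moments_below_dual_distance (q m n k : ℕ) (hq : IsPrimePow q)
    (hm : 0 < m) (hn : 0 < n)
    (K F : Type*) [Field K] [Field F] [Algebra K F] [Fintype K] [Fintype F]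
    (hK : Fintype.card K = q) (hF : Fintype.card F = q ^ m)
    (C : Submodule F (Fin n → F)) (hCk : Module.finrank F C = k)
    (ν : ℕ) (hν : ν ≤ n)
    (hdual : ∀ v : Fin n → F, (∀ c ∈ C, ∑ t, v t * c t = 0) → v ≠ 0 → ν < rk K v) :
    ∑ i ∈ Finset.range (n - ν + 1),
        gaussR (q : ℝ) (n - i) ν * (Nat.card {c : Fin n → F // c ∈ C ∧ rk K c = i} : ℝ) =
      (q : ℝ) ^ ((m : ℤ) * ((k : ℤ) - (ν : ℤ))) * gaussR (q : ℝ) n ν :=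
  rank_distribution_moments_below_dual_distance_general q m n k K F hK hF C hCk ν hdual
end
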